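/- arXiv:1402.2034 — 3 statements merged into one kernel-verified Lean document; each statement's English description precedes it below -/
import Mathlib

section
/- A permutation written in one-line notation as α n β (where n is its maximum) is stack sortable if and only if both α and β are stack sortable (as permutations of the values they contain) and every value in α is less than every value in β. -/
/-- Stack sorting with fuel (fuel = length always suffices). -/
def stackSortAux : ℕ → List ℕ → List ℕ
  | 0, _ => []
  | _ + 1, [] => []
  | fuel + 1, x :: xs =>
    let l := x :: xs
    let m := l.foldr max 0
    stackSortAux fuel (l.takeWhile (· ≠ m)) ++
      stackSortAux fuel ((l.dropWhile (· ≠ m)).tail) ++ [m]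

/-- The stack sorting operator `S`: `S(ε) = ε` and `S(α n β) = S(α) S(β) n`
where `n` is the maximum element. -/
def stackSort (l : List ℕ) : List ℕ := stackSortAux l.length l

/-- `σ` avoids the pattern 231. -/
def Avoids231 (σ : List ℕ) : Prop :=
  ¬ ∃ i j k, i < j ∧ j < k ∧ k < σ.length ∧
      σ.getD k 0 < σ.getD i 0 ∧ σ.getD i 0 < σ.getD j 0

/-- `σ` avoids the pattern 132. -/
def Avoids132 (σ : List ℕ) : Prop :=
  ¬ ∃ i j k, i < j ∧ j < k ∧ k < σ.length ∧
      σ.getD i 0 < σ.getD k 0 ∧ σ.getD k 0 < σ.getD j 0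

/-- Binary trees with natural number labels. -/
inductive BTree where
  | leaf : BTree
  | node : BTree → ℕ → BTree → BTree

def BTree.inorder : BTree → List ℕ
  | .leaf => []
  | .node l n r => l.inorder ++ [n] ++ r.inorder

def BTree.postorder : BTree → List ℕ
  | .leaf => []
  | .node l n r => l.postorder ++ r.postorder ++ [n]

/-- A tree is decreasing when labels strictly decrease from root to leaves. -/
def BTree.Decreasing : BTree → Prop
  | .leaf => True
  | .node l n r =>
      l.Decreasing ∧ r.Decreasing ∧
      (∀ x ∈ l.inorder, x < n) ∧ (∀ x ∈ r.inorder, x < n)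

/-- The underlying unlabeled shape of a tree (labels replaced by `0`). -/
def BTree.shape : BTree → BTree
  | .leaf => .leaf
  | .node l _ r => .node l.shape 0 r.shape

def BTree.map (f : ℕ → ℕ) : BTree → BTree
  | .leaf => .leaf
  | .node l n r => .node (l.map f) (f n) (r.map f)

/-- Labels on the rightmost branch from the root. -/
def BTree.rightBranch : BTree → List ℕ
  | .leaf => []
  | .node _ n r => n :: r.rightBranch

/-- Labels on the leftmost branch from the root. -/
def BTree.leftBranch : BTree → List ℕ
  | .leaf => []
  | .node l n _ => n :: l.leftBranch

def TinAux : ℕ → List ℕ → BTree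
  | 0, _ => .leaf
  | _ + 1, [] => .leaf
  | fuel + 1, x :: xs =>
    let l := x :: xs
    let m := l.foldr max 0
    .node (TinAux fuel (l.takeWhile (· ≠ m))) m
          (TinAux fuel ((l.dropWhile (· ≠ m)).tail))

/-- The decreasing binary tree whose in-order reading is `l`. -/
def Tin (l : List ℕ) : BTree := TinAux l.length l

def PpermAux : ℕ → List ℕ → List ℕ
  | 0, _ => []
  | _ + 1, [] => []
  | fuel + 1, x :: xs =>
    let l := x :: xs
    let m := l.foldr max 0
    let α := l.takeWhile (· ≠ m)
    let β := (l.dropWhile (· ≠ m)).tail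
    (PpermAux fuel α).map (· + β.length) ++ [m] ++
      PpermAux fuel (β.map (· - α.length))

/-- The bijection `P` from 231-avoiding to 132-avoiding permutations,
`P(ε) = ε` and `P(α ⊕ (1 ⊖ β)) = (P(α) ⊕ 1) ⊖ P(β)`. -/
def Pperm (l : List ℕ) : List ℕ := PpermAux l.length l

/-- Direct sum of permutations: `α ⊕ β`. -/
def osum (α β : List ℕ) : List ℕ := α ++ β.map (· + α.length)

/-- Skew sum of permutations: `α ⊖ β`. -/
def ossum (α β : List ℕ) : List ℕ := α.map (· + β.length) ++ β

def lrP : ℕ → List ℕ × List ℕ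
  | 0 => ([], [])
  | m + 1 => (ossum [1] (lrP m).2, osum (lrP m).1 [1])

/-- `λ_n`: `λ_{m+1} = 1 ⊖ ρ_m`. -/
def lamP (n : ℕ) : List ℕ := (lrP n).1

/-- `ρ_n`: `ρ_{m+1} = λ_m ⊕ 1`. -/
def rhoP (n : ℕ) : List ℕ := (lrP n).2

/-- `s` and `p` are order isomorphic lists. -/
def OrderIsoList (s p : List ℕ) : Prop :=
  s.length = p.length ∧
  ∀ i j, i < s.length → j < s.length →
    (s.getD i 0 < s.getD j 0 ↔ p.getD i 0 < p.getD j 0)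

/-- `σ` contains the pattern `π`. -/
def Contains (σ π : List ℕ) : Prop :=
  ∃ s : List ℕ, s.Sublist σ ∧ OrderIsoList s π

/-- The up-down word of a permutation (`true` = ascent `u`, `false` = descent `d`). -/
def updown (l : List ℕ) : List Bool :=
  (l.zip l.tail).map (fun p => decide (p.1 < p.2))

/-- No value larger than `max x y` occurs (strictly) between `x` and `y` in `l`. -/
def NoLargerBetween (l : List ℕ) (x y : ℕ) : Prop :=
  ∀ i j k, i < j → j < k → k < l.length →
    ((l.getD i 0 = x ∧ l.getD k 0 = y) ∨ (l.getD i 0 = y ∧ l.getD k 0 = x)) →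
    l.getD j 0 ≤ max x y

/-- The basic operators: stack sorting `S` and reversal `R`. -/
inductive SOp where
  | s : SOp
  | r : SOp

def applyOp : SOp → List ℕ → List ℕ
  | .s => stackSort
  | .r => List.reverse

/-- A composition of operators from `{S, R}`. -/
def applyOps (ops : List SOp) : List ℕ → List ℕ :=
  ops.foldr (fun op f => applyOp op ∘ f) id

/-- `i` is the position of a left-to-right maximum of `l`. -/
def LRmaxPos (l : List ℕ) (i : ℕ) : Prop :=
  i < l.length ∧ ∀ j, j < i → l.getD j 0 < l.getD i 0

/-- `i` is the position of a right-to-left maximum of `l`. -/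
def RLmaxPos (l : List ℕ) (i : ℕ) : Prop :=
  i < l.length ∧ ∀ j, i < j → j < l.length → l.getD j 0 < l.getD i 0

/-- The reverse Zeilberger statistic: the largest `k` such that
`(n-k+1) … (n-1) n` is a subword of `l`, where `n = l.length`. -/
noncomputable def Rzeil (l : List ℕ) : ℕ :=
  sSup {k | (List.range' (l.length - k + 1) k).Sublist l}
/-- `l` is stack sortable: `S` sorts it into increasing order. -/
def Sortable (l : List ℕ) : Prop :=
  stackSort l = List.insertionSort (· ≤ ·) l

/-! Because `S` permutes its input, `S(α n β) = S(α) S(β) n` is increasing exactly when `S(α)`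
and `S(β)` are increasing and every value of `α` is at most every value of `β`; distinctness
makes the last inequality strict. -/

section SplitAtFirst

variable {α : Type*} [DecidableEq α] {l l₁ l₂ : List α} {a : α}

lemma takeWhile_ne_append_cons (h : a ∉ l₁) :
    (l₁ ++ a :: l₂).takeWhile (· ≠ a) = l₁ := by
  rw [List.takeWhile_append_of_pos fun x hx => by simpa using ne_of_mem_of_not_mem hx h]
  simp

lemma dropWhile_ne_append_cons (h : a ∉ l₁) :
    (l₁ ++ a :: l₂).dropWhile (· ≠ a) = a :: l₂ := by
  rw [List.dropWhile_append_of_pos fun x hx => by simpa using ne_of_mem_of_not_mem hx h]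
  simp

lemma takeWhile_ne_append_cons_tail_dropWhile_ne (h : a ∈ l) :
    l.takeWhile (· ≠ a) ++ a :: (l.dropWhile (· ≠ a)).tail = l := by
  induction l with
  | nil => simp at h
  | cons x xs ih =>
    by_cases hx : x = a
    · simp [hx]
    · rw [List.takeWhile_cons_of_pos (by simpa using hx),
        List.dropWhile_cons_of_pos (by simpa using hx), List.cons_append,
        ih (by simpa [Ne.symm hx] using h)]

lemma length_takeWhile_ne_lt (h : a ∈ l) : (l.takeWhile (· ≠ a)).length < l.length := by
  have := congrArg List.length (takeWhile_ne_append_cons_tail_dropWhile_ne h)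
  simp only [List.length_append, List.length_cons] at this
  omega

lemma length_tail_dropWhile_ne_lt (h : a ∈ l) :
    (l.dropWhile (· ≠ a)).tail.length < l.length := by
  have := congrArg List.length (takeWhile_ne_append_cons_tail_dropWhile_ne h)
  simp only [List.length_append, List.length_cons] at this
  omega

end SplitAtFirst

lemma foldr_max_mem {l : List ℕ} (hl : l ≠ []) : l.foldr max 0 ∈ l :=
  List.maximum_mem (List.foldr_max_of_ne_nil hl).symm

lemma foldr_max_eq {l : List ℕ} {n : ℕ} (hn : n ∈ l) (h : ∀ x ∈ l, x ≤ n) :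
    l.foldr max 0 = n :=
  le_antisymm (List.max_le_of_forall_le l n h) (List.le_max_of_le hn le_rfl)

section StackSort

variable {l : List ℕ}

lemma stackSortAux_succ (hl : l ≠ []) (f : ℕ) :
    stackSortAux (f + 1) l =
      stackSortAux f (l.takeWhile (· ≠ l.foldr max 0)) ++
        stackSortAux f ((l.dropWhile (· ≠ l.foldr max 0)).tail) ++ [l.foldr max 0] := by
  obtain ⟨x, xs, rfl⟩ := List.exists_cons_of_ne_nil hl
  rfl

lemma stackSortAux_congr_fuel {f g : ℕ} (hf : l.length ≤ f) (hg : l.length ≤ g) :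
    stackSortAux f l = stackSortAux g l := by
  induction f generalizing l g with
  | zero => rw [List.eq_nil_of_length_eq_zero (Nat.le_zero.1 hf)]; cases g <;> rfl
  | succ f ih =>
    rcases eq_or_ne l [] with rfl | hl
    · cases g <;> rfl
    obtain ⟨g, rfl⟩ := Nat.exists_eq_add_one_of_ne_zero
      (Nat.pos_iff_ne_zero.1 ((List.length_pos_iff.2 hl).trans_le hg))
    have hm := foldr_max_mem hl
    have h₁ := length_takeWhile_ne_lt hm
    have h₂ := length_tail_dropWhile_ne_lt hm
    rw [stackSortAux_succ hl, stackSortAux_succ hl, ih (g := g) (by omega) (by omega),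
      ih (g := g) (by omega) (by omega)]

lemma stackSortAux_eq_stackSort {f : ℕ} (hf : l.length ≤ f) : stackSortAux f l = stackSort l :=
  stackSortAux_congr_fuel hf le_rfl

lemma stackSort_of_ne_nil (hl : l ≠ []) :
    stackSort l =
      stackSort (l.takeWhile (· ≠ l.foldr max 0)) ++
        stackSort ((l.dropWhile (· ≠ l.foldr max 0)).tail) ++ [l.foldr max 0] := by
  have hm := foldr_max_mem hl
  have h₁ := length_takeWhile_ne_lt hm
  have h₂ := length_tail_dropWhile_ne_lt hm
  obtain ⟨k, hk⟩ := Nat.exists_eq_add_one_of_ne_zero (List.length_pos_iff.2 hl).ne'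
  rw [stackSort, hk, stackSortAux_succ hl, stackSortAux_eq_stackSort (by omega),
    stackSortAux_eq_stackSort (by omega)]

theorem stackSort_perm (l : List ℕ) : (stackSort l).Perm l := by
  rcases eq_or_ne l [] with rfl | hl
  · rfl
  have hm := foldr_max_mem hl
  rw [stackSort_of_ne_nil hl, List.append_assoc]
  conv_rhs => rw [← takeWhile_ne_append_cons_tail_dropWhile_ne hm]
  exact (stackSort_perm _).append
    ((List.perm_append_singleton _ _).trans ((stackSort_perm _).cons _))
termination_by l.length
decreasing_by
  exacts [length_takeWhile_ne_lt hm, length_tail_dropWhile_ne_lt hm]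

@[simp]
lemma mem_stackSort {x : ℕ} : x ∈ stackSort l ↔ x ∈ l :=
  (stackSort_perm l).mem_iff

lemma sortable_iff_pairwise_stackSort : Sortable l ↔ (stackSort l).Pairwise (· ≤ ·) :=
  ⟨fun h => h ▸ List.pairwise_insertionSort _ _, fun h =>
    List.Perm.eq_of_pairwise' h (List.pairwise_insertionSort _ _)
      ((stackSort_perm l).trans (List.perm_insertionSort _ l).symm)⟩

theorem stackSort_append_singleton_append {α β : List ℕ} {n : ℕ} (hα : ∀ x ∈ α, x < n)
    (hβ : ∀ x ∈ β, x ≤ n) :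
    stackSort (α ++ [n] ++ β) = stackSort α ++ stackSort β ++ [n] := by
  have hmax : (α ++ [n] ++ β).foldr max 0 = n := by
    refine foldr_max_eq (by simp) fun x hx => ?_
    simp only [List.mem_append, List.mem_singleton] at hx
    rcases hx with (hx | rfl) | hx
    exacts [(hα x hx).le, le_rfl, hβ x hx]
  have hn : n ∉ α := fun h => lt_irrefl n (hα n h)
  rw [stackSort_of_ne_nil (by simp), hmax, show α ++ [n] ++ β = α ++ n :: β by simp,
    takeWhile_ne_append_cons hn, dropWhile_ne_append_cons hn, List.tail_cons]

end StackSort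

/-- `α n β` (with `n` the maximum) is stack sortable iff `α` and
`β` are stack sortable and every value of `α` is less than every value of `β`. -/
theorem sortable_decomposition :
    ∀ (α β : List ℕ) (n : ℕ), (α ++ [n] ++ β).Nodup →
      (∀ x ∈ α ++ β, x < n) →
      (Sortable (α ++ [n] ++ β) ↔
        Sortable α ∧ Sortable β ∧ ∀ a ∈ α, ∀ b ∈ β, a < b) := by
  intro α β n hnd hlt
  have hα : ∀ x ∈ α, x < n := fun x hx => hlt x (List.mem_append_left β hx)
  have hβ : ∀ x ∈ β, x < n := fun x hx => hlt x (List.mem_append_right α hx)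
  have hne : ∀ a ∈ α, ∀ b ∈ β, a ≠ b := fun a ha b hb hab =>
    List.disjoint_of_nodup_append hnd (List.mem_append_left [n] ha) (hab ▸ hb)
  have hle_iff_lt : (∀ a ∈ α, ∀ b ∈ β, a ≤ b) ↔ ∀ a ∈ α, ∀ b ∈ β, a < b :=
    ⟨fun h a ha b hb => (h a ha b hb).lt_of_ne (hne a ha b hb),
      fun h a ha b hb => (h a ha b hb).le⟩
  simp only [sortable_iff_pairwise_stackSort,
    stackSort_append_singleton_append hα fun x hx => (hβ x hx).le, List.pairwise_append,
    mem_stackSort, hle_iff_lt]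
  refine ⟨And.left, fun h => ⟨h, List.pairwise_singleton _ n, fun x hx y hy => ?_⟩⟩
  rw [List.mem_singleton.1 hy]
  exact (hlt x (by simpa using hx)).le
end

section
/- The bijection P from 231-avoiding to 132-avoiding permutations preserves the up-down word: for every 231-avoiding π, the up-down words of π and P(π) coincide. In particular P preserves the descent set. -/
/-! Let `π` be a 231-avoiding permutation of `1, …, n` and write `π = α n γ`. Any `x ∈ α`,
`y ∈ γ` with `y < x` would form a 231 pattern `x n y`, so `α` is a 231-avoiding permutation of
`1, …, |α|` and `γ` is `β` shifted up by `|α|`, i.e. `π = α ⊕ (1 ⊖ β)`. Then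
`P(π) = (P(α) ⊕ 1) ⊖ P(β)` is `P(α)` shifted up, followed by `n`, followed by `P(β)`. Shifting a
word does not change its up-down word, and since `n` is the largest entry, the letters next to
it are `u` before it and `d` after it, in `π` and in `P(π)` alike; induction does the rest. For a
permutation, the descent set is read off the up-down word, since adjacent entries differ. -/

theorem List.foldr_max_zero_mem {l : List ℕ} (h : l ≠ []) : l.foldr max 0 ∈ l :=
  List.maximum_mem (List.foldr_max_of_ne_nil h).symm

theorem List.foldr_max_zero_eq_of_mem {l : List ℕ} {m : ℕ} (hm : m ∈ l) (h : ∀ x ∈ l, x ≤ m) :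
    l.foldr max 0 = m :=
  le_antisymm (List.max_le_of_forall_le l m h) (List.le_max_of_le hm le_rfl)

theorem List.exists_eq_append_cons_max {l : List ℕ} (h : l ≠ []) :
    ∃ α m β, l = α ++ m :: β ∧ (∀ x ∈ α, x < m) ∧ ∀ x ∈ β, x ≤ m := by
  obtain ⟨α, β, hl, hα⟩ := List.eq_append_cons_of_mem (List.foldr_max_zero_mem h)
  have hle : ∀ x ∈ l, x ≤ l.foldr max 0 := fun x hx => List.le_max_of_le hx le_rfl
  refine ⟨α, _, β, hl, fun x hx => lt_of_le_of_ne ?_ ?_, fun x hx => hle x ?_⟩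
  · exact hle x (hl ▸ List.mem_append_left _ hx)
  · rintro rfl; exact hα hx
  · exact hl ▸ List.mem_append_right _ (List.mem_cons_of_mem _ hx)

theorem PpermAux_append_cons {α β : List ℕ} {m : ℕ} (hα : ∀ x ∈ α, x < m)
    (hβ : ∀ x ∈ β, x ≤ m) (f : ℕ) :
    PpermAux (f + 1) (α ++ m :: β) =
      (PpermAux f α).map (· + β.length) ++ m :: PpermAux f (β.map (· - α.length)) := by
  have hmax : (α ++ m :: β).foldr max 0 = m := by
    refine List.foldr_max_zero_eq_of_mem (by simp) fun x hx => ?_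
    simp only [List.mem_append, List.mem_cons] at hx
    rcases hx with hx | rfl | hx
    exacts [(hα x hx).le, le_rfl, hβ x hx]
  have hmα : ∀ x ∈ α, decide (x ≠ m) = true := fun x hx => by simpa using (hα x hx).ne
  have htake : (α ++ m :: β).takeWhile (· ≠ m) = α := by
    rw [List.takeWhile_append_of_pos hmα]; simp
  have hdrop : (α ++ m :: β).dropWhile (· ≠ m) = m :: β := by
    rw [List.dropWhile_append_of_pos hmα]; simp
  obtain ⟨x, xs, hxs⟩ := List.exists_cons_of_ne_nil (show α ++ m :: β ≠ [] by simp)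
  rw [hxs, PpermAux, ← hxs, hmax, htake, hdrop]
  simp

theorem PpermAux_congr_fuel {f g : ℕ} {l : List ℕ} (hf : l.length ≤ f) (hg : l.length ≤ g) :
    PpermAux f l = PpermAux g l := by
  induction f generalizing g l with
  | zero => rw [List.eq_nil_of_length_eq_zero (Nat.le_zero.1 hf)]; cases g <;> rfl
  | succ f ih =>
    rcases eq_or_ne l [] with rfl | hl
    · cases g <;> rfl
    obtain ⟨α, m, β, rfl, hα, hβ⟩ := List.exists_eq_append_cons_max hl
    obtain ⟨g, rfl⟩ : ∃ g', g = g' + 1 := Nat.exists_eq_add_one.2 (by simp at hg; omega)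
    simp only [List.length_append, List.length_cons] at hf hg
    rw [PpermAux_append_cons hα hβ, PpermAux_append_cons hα hβ, ih (g := g) (by omega) (by omega),
      ih (g := g) (by simp; omega) (by simp; omega)]

theorem length_PpermAux {f : ℕ} {l : List ℕ} (hf : l.length ≤ f) :
    (PpermAux f l).length = l.length := by
  induction f generalizing l with
  | zero => rw [List.eq_nil_of_length_eq_zero (Nat.le_zero.1 hf)]; rfl
  | succ f ih =>
    rcases eq_or_ne l [] with rfl | hl
    · rfl
    obtain ⟨α, m, β, rfl, hα, hβ⟩ := List.exists_eq_append_cons_max hl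
    simp only [List.length_append, List.length_cons] at hf
    simp [PpermAux_append_cons hα hβ, ih (l := α) (by omega), ih (l := β.map _) (by simp; omega)]

theorem length_Pperm (l : List ℕ) : (Pperm l).length = l.length :=
  length_PpermAux le_rfl

theorem Pperm_append_cons {α β : List ℕ} {m : ℕ} (hα : ∀ x ∈ α, x < m)
    (hβ : ∀ x ∈ β, x ≤ m) :
    Pperm (α ++ m :: β) = (Pperm α).map (· + β.length) ++ m :: Pperm (β.map (· - α.length)) := by
  rw [Pperm, show (α ++ m :: β).length = (α.length + β.length) + 1 by simp; omega,
    PpermAux_append_cons hα hβ, PpermAux_congr_fuel (by omega) le_rfl,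
    PpermAux_congr_fuel (by simp) (le_refl (β.map _).length)]
  rfl

theorem List.le_of_mem_of_perm_range' {l : List ℕ} {n : ℕ} (hl : l.Perm (List.range' 1 n))
    {x : ℕ} (hx : x ∈ l) : x ≤ n := by
  have := hl.subset hx
  rw [List.mem_range'_1] at this
  omega

theorem osum_ossum_one (α β : List ℕ) :
    osum α (ossum [1] β) = α ++ (α.length + β.length + 1) :: β.map (· + α.length) := by
  simp [osum, ossum]; omega

theorem length_osum_ossum_one (α β : List ℕ) :
    (osum α (ossum [1] β)).length = α.length + β.length + 1 := by
  simp [osum_ossum_one]; omega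

theorem ossum_osum_one (α β : List ℕ) :
    ossum (osum α [1]) β = α.map (· + β.length) ++ (α.length + β.length + 1) :: β := by
  simp [osum, ossum]; omega

theorem List.map_add_right_range' (s n k : ℕ) :
    (List.range' s n).map (· + k) = List.range' (s + k) n := by
  rw [Nat.add_comm s k, ← List.map_add_range']
  exact List.map_congr_left fun x _ => Nat.add_comm x k

theorem osum_perm_range' {s t : List ℕ} (hs : s.Perm (List.range' 1 s.length))
    (ht : t.Perm (List.range' 1 t.length)) :
    (osum s t).Perm (List.range' 1 (osum s t).length) := by
  rw [osum, List.length_append, List.length_map, ← List.range'_append_1,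
    ← List.map_add_right_range']
  exact hs.append (ht.map _)

theorem ossum_perm_range' {s t : List ℕ} (hs : s.Perm (List.range' 1 s.length))
    (ht : t.Perm (List.range' 1 t.length)) :
    (ossum s t).Perm (List.range' 1 (ossum s t).length) := by
  rw [ossum, List.length_append, List.length_map, Nat.add_comm, ← List.range'_append_1,
    ← List.map_add_right_range']
  exact (hs.map _).append ht |>.trans List.perm_append_comm

theorem Pperm_osum_ossum {α β : List ℕ} (hα : ∀ x ∈ α, x ≤ α.length)
    (hβ : ∀ x ∈ β, x ≤ β.length) :
    Pperm (osum α (ossum [1] β)) = ossum (osum (Pperm α) [1]) (Pperm β) := by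
  rw [osum_ossum_one, ossum_osum_one, Pperm_append_cons, length_Pperm, length_Pperm]
  · simp [Function.comp_def]
  · intro x hx; have := hα x hx; omega
  · simp only [List.mem_map]; rintro _ ⟨x, hx, rfl⟩; have := hβ x hx; omega

/-- Sorting `s` and `t` separately already sorts `s ++ t`, so the two sorted halves are the two
halves of the range. -/
theorem List.perm_range'_of_append_perm_range' {s t : List ℕ} {k : ℕ}
    (h : (s ++ t).Perm (List.range' k (s.length + t.length)))
    (hst : ∀ x ∈ s, ∀ y ∈ t, x ≤ y) :
    s.Perm (List.range' k s.length) ∧ t.Perm (List.range' (k + s.length) t.length) := by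
  have hs : s.mergeSort.Perm s := List.mergeSort_perm s _
  have ht : t.mergeSort.Perm t := List.mergeSort_perm t _
  have hsorted : (s.mergeSort ++ t.mergeSort).Pairwise (· ≤ ·) :=
    List.pairwise_append.2 ⟨List.pairwise_mergeSort' _ s, List.pairwise_mergeSort' _ t,
      fun x hx y hy => hst x (hs.subset hx) y (ht.subset hy)⟩
  have heq := ((hs.append ht).trans h).eq_of_pairwise' hsorted List.pairwise_le_range'
  obtain ⟨j, -, hs', ht'⟩ := List.range'_eq_append_iff.1 heq.symm
  obtain rfl : j = s.length := by simpa [hs.length_eq] using (congrArg List.length hs').symm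
  exact ⟨hs.symm.trans (hs' ▸ .refl _), ht.symm.trans (by rw [ht']; simp)⟩

theorem avoids231_iff_forall_sublist {σ : List ℕ} :
    Avoids231 σ ↔ ∀ a b c, [a, b, c].Sublist σ → ¬ (c < a ∧ a < b) := by
  constructor
  · rintro h a b c hs ⟨hca, hab⟩
    obtain ⟨is, his, hinc⟩ := List.sublist_eq_map_getElem hs
    rcases is with _ | ⟨i, _ | ⟨j, _ | ⟨k, _ | _⟩⟩⟩ <;> simp at his
    obtain ⟨rfl, rfl, rfl⟩ := his
    simp only [List.pairwise_cons, List.mem_cons, List.not_mem_nil] at hinc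
    refine h ⟨i, j, k, hinc.1 j (by simp), hinc.2.1 k (by simp), k.2, ?_⟩
    simp only [List.getD_eq_getElem _ _ i.2, List.getD_eq_getElem _ _ j.2,
      List.getD_eq_getElem _ _ k.2]
    exact ⟨hca, hab⟩
  · rintro h ⟨i, j, k, hij, hjk, hk, hki, hij'⟩
    refine h _ _ _ (List.map_getElem_sublist (is := [⟨i, by omega⟩, ⟨j, by omega⟩, ⟨k, hk⟩])
      (by simp [Fin.mk_lt_mk]; omega)) ?_
    rw [List.getD_eq_getElem _ _ hk, List.getD_eq_getElem _ _ (show i < σ.length by omega)] at hki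
    rw [List.getD_eq_getElem _ _ (show i < σ.length by omega),
      List.getD_eq_getElem _ _ (show j < σ.length by omega)] at hij'
    exact ⟨hki, hij'⟩

theorem Avoids231.sublist {σ τ : List ℕ} (h : Avoids231 σ) (hτ : τ.Sublist σ) : Avoids231 τ :=
  avoids231_iff_forall_sublist.2 fun _ _ _ hs =>
    avoids231_iff_forall_sublist.1 h _ _ _ (hs.trans hτ)

theorem Avoids231.of_map {f : ℕ → ℕ} (hf : StrictMono f) {σ : List ℕ}
    (h : Avoids231 (σ.map f)) : Avoids231 σ :=
  avoids231_iff_forall_sublist.2 fun _ _ _ hs ⟨hca, hab⟩ =>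
    avoids231_iff_forall_sublist.1 h _ _ _ (hs.map f) ⟨hf hca, hf hab⟩

theorem Avoids231.le_of_mem_of_mem {α β : List ℕ} {m x y : ℕ} (h : Avoids231 (α ++ m :: β))
    (hx : x ∈ α) (hxm : x < m) (hy : y ∈ β) : x ≤ y := by
  have hs : [x, m, y].Sublist (α ++ m :: β) :=
    (List.singleton_sublist.2 hx).append ((List.singleton_sublist.2 hy).cons_cons m)
  exact not_lt.1 fun hyx => avoids231_iff_forall_sublist.1 h x m y hs ⟨hyx, hxm⟩

theorem Avoids231.exists_eq_osum_ossum {l : List ℕ} (hl : l.Perm (List.range' 1 l.length))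
    (hne : l ≠ []) (h : Avoids231 l) :
    ∃ α β, l = osum α (ossum [1] β) ∧ α.Perm (List.range' 1 α.length) ∧
      β.Perm (List.range' 1 β.length) ∧ Avoids231 α ∧ Avoids231 β := by
  obtain ⟨n, hn⟩ := Nat.exists_eq_add_one.2 (List.length_pos_iff.2 hne)
  rw [hn] at hl
  obtain ⟨α, γ, rfl, hnα⟩ :=
    List.eq_append_cons_of_mem (a := n + 1) (hl.mem_iff.2 (by rw [List.mem_range'_1]; omega))
  obtain rfl : n = α.length + γ.length := by simp at hn; omega
  have hαγ : ∀ x ∈ α, ∀ y ∈ γ, x ≤ y := fun x hx y hy =>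
    have hxn := List.le_of_mem_of_perm_range' hl (List.mem_append_left _ hx)
    h.le_of_mem_of_mem hx (lt_of_le_of_ne hxn (by rintro rfl; exact hnα hx)) hy
  have hperm : (α ++ γ).Perm (List.range' 1 (α.length + γ.length)) := by
    refine (List.perm_cons _).1 (List.perm_middle.symm.trans (hl.trans ?_))
    rw [← List.range'_append_1 (n := 1)]
    simp [Nat.add_comm 1]
  obtain ⟨hα, hγ⟩ := List.perm_range'_of_append_perm_range' hperm hαγ
  have hγ_eq : (γ.map (· - α.length)).map (· + α.length) = γ := by
    rw [List.map_map]
    refine (List.map_congr_left fun y hy => ?_).trans (List.map_id γ)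
    have := hγ.subset hy
    rw [List.mem_range'_1] at this
    simp only [Function.comp_apply, id_eq]
    omega
  refine ⟨α, γ.map (· - α.length), ?_, hα, ?_, h.sublist (List.sublist_append_left _ _), ?_⟩
  · rw [osum_ossum_one, hγ_eq, List.length_map]
  · rw [List.length_map]
    simpa [List.map_sub_range'] using hγ.map (· - α.length)
  · refine Avoids231.of_map (add_left_strictMono (a := α.length)) ?_
    rw [hγ_eq]
    exact h.sublist ((List.sublist_cons_self _ _).trans (List.sublist_append_right _ _))

theorem updown_cons_cons (a b : ℕ) (l : List ℕ) :
    updown (a :: b :: l) = decide (a < b) :: updown (b :: l) := rfl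

theorem updown_map_of_strictMono {f : ℕ → ℕ} (hf : StrictMono f) (l : List ℕ) :
    updown (l.map f) = updown l := by
  induction l with
  | nil => rfl
  | cons a l ih =>
    cases l with
    | nil => rfl
    | cons b l =>
      rw [List.map_cons, List.map_cons, updown_cons_cons, ← List.map_cons, ih, updown_cons_cons]
      simp only [hf.lt_iff_lt]

theorem updown_append_cons (A : List ℕ) (m : ℕ) (B : List ℕ) :
    updown (A ++ m :: B) = updown (A ++ [m]) ++ updown (m :: B) := by
  induction A with
  | nil => rfl
  | cons a A ih =>
    cases A with
    | nil => rfl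
    | cons b A => simp only [List.cons_append, updown_cons_cons] at ih ⊢; rw [ih]

theorem updown_append_singleton_of_forall_lt {A : List ℕ} {m : ℕ} (hA : A ≠ [])
    (h : ∀ x ∈ A, x < m) : updown (A ++ [m]) = updown A ++ [true] := by
  induction A with
  | nil => exact absurd rfl hA
  | cons a A ih =>
    cases A with
    | nil => simp [updown_cons_cons, h a (by simp)]; rfl
    | cons b A =>
      simp only [List.cons_append, updown_cons_cons] at ih ⊢
      rw [ih (List.cons_ne_nil _ _) fun x hx => h x (List.mem_cons_of_mem _ hx)]

theorem updown_cons_of_forall_lt {B : List ℕ} {m : ℕ} (hB : B ≠ []) (h : ∀ x ∈ B, x < m) :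
    updown (m :: B) = false :: updown B := by
  obtain ⟨b, B, rfl⟩ := List.exists_cons_of_ne_nil hB
  simpa [updown_cons_cons] using (h b (by simp)).le

theorem updown_append_cons_congr {A A' B B' : List ℕ} {m : ℕ}
    (hA : A.length = A'.length) (hB : B.length = B'.length)
    (hudA : updown A = updown A') (hudB : updown B = updown B')
    (hAm : ∀ x ∈ A, x < m) (hA'm : ∀ x ∈ A', x < m)
    (hBm : ∀ x ∈ B, x < m) (hB'm : ∀ x ∈ B', x < m) :
    updown (A ++ m :: B) = updown (A' ++ m :: B') := by
  rw [updown_append_cons A, updown_append_cons A']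
  congr 1
  · rcases eq_or_ne A [] with rfl | hA0
    · rw [List.eq_nil_of_length_eq_zero hA.symm]
    · have hA'0 : A' ≠ [] := List.ne_nil_of_length_pos (hA ▸ List.length_pos_iff.2 hA0)
      rw [updown_append_singleton_of_forall_lt hA0 hAm,
        updown_append_singleton_of_forall_lt hA'0 hA'm, hudA]
  · rcases eq_or_ne B [] with rfl | hB0
    · rw [List.eq_nil_of_length_eq_zero hB.symm]
    · have hB'0 : B' ≠ [] := List.ne_nil_of_length_pos (hB ▸ List.length_pos_iff.2 hB0)
      rw [updown_cons_of_forall_lt hB0 hBm, updown_cons_of_forall_lt hB'0 hB'm, hudB]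

theorem getElem?_updown {l : List ℕ} {i : ℕ} (h : i + 1 < l.length) :
    (updown l)[i]? = some (decide (l[i] < l[i + 1])) := by
  simp [updown, List.getElem?_zip_eq_some, List.getElem?_eq_getElem h,
    List.getElem?_eq_getElem (Nat.lt_of_succ_lt h)]

theorem List.Nodup.descent_iff_getElem?_updown {l : List ℕ} (hl : l.Nodup) (i : ℕ) :
    (i + 1 < l.length ∧ l.getD (i + 1) 0 < l.getD i 0) ↔ (updown l)[i]? = some false := by
  by_cases h : i + 1 < l.length
  · have hne : l[i] ≠ l[i + 1] := fun heq => by simpa using (hl.getElem_inj_iff).1 heq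
    rw [getElem?_updown h, List.getD_eq_getElem _ _ h,
      List.getD_eq_getElem _ _ (Nat.lt_of_succ_lt h)]
    simp only [h, true_and, Option.some.injEq, decide_eq_false_iff_not, not_lt]
    omega
  · have : (updown l)[i]? = none := List.getElem?_eq_none (by simp [updown]; omega)
    simp [h, this]

theorem Pperm_perm_range' {l : List ℕ} (hl : l.Perm (List.range' 1 l.length))
    (h : Avoids231 l) : (Pperm l).Perm (List.range' 1 l.length) := by
  rcases eq_or_ne l [] with rfl | hne
  · exact .refl _
  obtain ⟨α, β, rfl, hα, hβ, hα231, hβ231⟩ := h.exists_eq_osum_ossum hl hne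
  have hPα := Pperm_perm_range' hα hα231
  have hPβ := Pperm_perm_range' hβ hβ231
  rw [← length_Pperm α] at hPα
  rw [← length_Pperm β] at hPβ
  rw [← length_Pperm (osum α (ossum [1] β)), Pperm_osum_ossum
    (fun _ => List.le_of_mem_of_perm_range' hα) (fun _ => List.le_of_mem_of_perm_range' hβ)]
  exact ossum_perm_range' (osum_perm_range' hPα (.refl [1])) hPβ
termination_by l.length
decreasing_by all_goals (subst_vars; rw [length_osum_ossum_one]; omega)

theorem updown_Pperm {l : List ℕ} (hl : l.Perm (List.range' 1 l.length)) (h : Avoids231 l) :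
    updown (Pperm l) = updown l := by
  rcases eq_or_ne l [] with rfl | hne
  · rfl
  obtain ⟨α, β, rfl, hα, hβ, hα231, hβ231⟩ := h.exists_eq_osum_ossum hl hne
  have hPα := Pperm_perm_range' hα hα231
  have hPβ := Pperm_perm_range' hβ hβ231
  rw [Pperm_osum_ossum (fun _ => List.le_of_mem_of_perm_range' hα)
    (fun _ => List.le_of_mem_of_perm_range' hβ), osum_ossum_one, ossum_osum_one,
    length_Pperm, length_Pperm]
  refine updown_append_cons_congr (by simp [length_Pperm]) (by simp [length_Pperm])
    (by rw [updown_map_of_strictMono add_left_strictMono, updown_Pperm hα hα231])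
    (by rw [updown_map_of_strictMono add_left_strictMono, updown_Pperm hβ hβ231])
    ?_ ?_ ?_ ?_
  · simp only [List.mem_map]
    rintro _ ⟨x, hx, rfl⟩
    have := List.le_of_mem_of_perm_range' hPα hx
    omega
  · intro x hx
    have := List.le_of_mem_of_perm_range' hα hx
    omega
  · intro x hx
    have := List.le_of_mem_of_perm_range' hPβ hx
    omega
  · simp only [List.mem_map]
    rintro _ ⟨x, hx, rfl⟩
    have := List.le_of_mem_of_perm_range' hβ hx
    omega
termination_by l.length
decreasing_by all_goals (subst_vars; rw [length_osum_ossum_one]; omega)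

/-- `P` preserves the up-down word, in particular the descent set. -/
theorem Pperm_preserves_updown :
    ∀ π : List ℕ, π.Perm (List.range' 1 π.length) → Avoids231 π →
      updown (Pperm π) = updown π ∧
      {i | i + 1 < π.length ∧ π.getD (i + 1) 0 < π.getD i 0} =
        {i | i + 1 < (Pperm π).length ∧
          (Pperm π).getD (i + 1) 0 < (Pperm π).getD i 0} := by
  intro π hπ h
  have hud := updown_Pperm hπ h
  have hπnd : π.Nodup := hπ.nodup_iff.2 List.nodup_range'
  have hPnd : (Pperm π).Nodup := (Pperm_perm_range' hπ h).nodup_iff.2 List.nodup_range'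
  refine ⟨hud, Set.ext fun i => ?_⟩
  rw [Set.mem_ofPred_eq, Set.mem_ofPred_eq, hπnd.descent_iff_getElem?_updown,
    hPnd.descent_iff_getElem?_updown, hud]
end

section
/- For every 231-avoiding permutation π, applying the relabeling λ_π to every label of the decreasing tree T_in(π) produces the decreasing tree T_in(P(π)); in particular λ_π(T_in(π)) is again a decreasing tree. -/
/-!
A 231-avoiding permutation `π` of `[1, n]` splits as `π = α n γ` with every entry of `α` below
every entry of `γ` (otherwise `x n y` with `x ∈ α`, `y ∈ γ`, `y < x` is a 231), so `α` and `γ`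
are intervals and `π = α ⊕ (1 ⊖ β)` with `α`, `β` again 231-avoiding permutations. Along this
splitting `T_in(π)` has root `n`, left subtree `T_in(α)` and right subtree a shift of `T_in(β)`,
while `P(π) = (P(α) ⊕ 1) ⊖ P(β)` keeps `n` in the same place with smaller entries on both sides.
So `λ_π(T_in(π))` is decreasing, by induction on the splitting; the induction runs over
relabelings onto strictly monotone images of `P(π)`, since `λ_π` sends `α` onto a shift of
`P(α)`. Finally a decreasing tree is the `T_in` of its in-order reading, which for
`λ_π(T_in(π))` is `λ_π ∘ π = P(π)`.
-/

open List

namespace List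

section MaxSplit

variable {X Y : List ℕ} {m : ℕ}

lemma foldr_max_append_cons (hX : ∀ x ∈ X, x < m) (hY : ∀ y ∈ Y, y ≤ m) :
    (X ++ m :: Y).foldr max 0 = m := by
  induction X with
  | nil => simpa using List.max_le_of_forall_le Y m hY
  | cons a X ih =>
    simp only [mem_cons, forall_eq_or_imp] at hX
    simp [ih hX.2, hX.1.le]

lemma takeWhile_append_cons (hX : ∀ x ∈ X, x < m) :
    (X ++ m :: Y).takeWhile (· ≠ m) = X := by
  rw [takeWhile_append_of_pos (by simpa using fun x hx => (hX x hx).ne)]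
  simp

lemma tail_dropWhile_append_cons (hX : ∀ x ∈ X, x < m) :
    ((X ++ m :: Y).dropWhile (· ≠ m)).tail = Y := by
  rw [dropWhile_append_of_pos (by simpa using fun x hx => (hX x hx).ne)]
  simp

lemma exists_eq_append_cons_max_s15 {l : List ℕ} (hl : l ≠ []) :
    ∃ X m Y, l = X ++ m :: Y ∧ (∀ x ∈ X, x < m) ∧ ∀ y ∈ Y, y ≤ m := by
  induction l with
  | nil => exact absurd rfl hl
  | cons a t ih =>
    rcases eq_or_ne t [] with rfl | ht
    · exact ⟨[], a, [], rfl, by simp, by simp⟩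
    obtain ⟨X, m, Y, rfl, hX, hY⟩ := ih ht
    by_cases ham : a < m
    · exact ⟨a :: X, m, Y, rfl, by simpa [ham] using hX, hY⟩
    · refine ⟨[], a, X ++ m :: Y, rfl, by simp, fun y hy => ?_⟩
      simp only [mem_append, mem_cons] at hy
      rcases hy with hy | rfl | hy
      · exact ((hX y hy).trans_le (not_lt.1 ham)).le
      · exact not_lt.1 ham
      · exact (hY y hy).trans (not_lt.1 ham)

@[elab_as_elim]
theorem induction_on_max_split {motive : List ℕ → Prop} (nil : motive [])
    (split : ∀ X m Y, (∀ x ∈ X, x < m) → (∀ y ∈ Y, y ≤ m) →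
      motive X → motive Y → motive (X ++ m :: Y)) (l : List ℕ) : motive l := by
  induction hn : l.length using Nat.strong_induction_on generalizing l with
  | _ n ih =>
    rcases eq_or_ne l [] with rfl | hl
    · exact nil
    obtain ⟨X, m, Y, rfl, hX, hY⟩ := exists_eq_append_cons_max_s15 hl
    simp only [length_append, length_cons] at hn
    exact split X m Y hX hY (ih _ (by omega) X rfl) (ih _ (by omega) Y rfl)

end MaxSplit

section PermRange

variable {l α γ : List ℕ}

lemma le_of_perm_range' {n : ℕ} (h : l ~ range' 1 n) {x : ℕ} (hx : x ∈ l) : x ≤ n := by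
  have := mem_range'_1.1 (h.subset hx)
  omega

/-- Sorting both blocks gives a sorted permutation of the interval, hence the interval itself. -/
theorem perm_range'_of_append {s : ℕ} (h : α ++ γ ~ range' s (α.length + γ.length))
    (hlt : ∀ x ∈ α, ∀ y ∈ γ, x < y) :
    α ~ range' s α.length ∧ γ ~ range' (s + α.length) γ.length := by
  have hsα := perm_insertionSort (· ≤ ·) α
  have hsγ := perm_insertionSort (· ≤ ·) γ
  have hsorted : (α.insertionSort (· ≤ ·) ++ γ.insertionSort (· ≤ ·)).Pairwise (· ≤ ·) :=
    pairwise_append.2 ⟨pairwise_insertionSort _ _, pairwise_insertionSort _ _,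
      fun x hx y hy => (hlt x (hsα.subset hx) y (hsγ.subset hy)).le⟩
  have heq := ((hsα.append hsγ).trans h).eq_of_pairwise' hsorted (pairwise_le_range' 1)
  rw [← range'_append_1] at heq
  obtain ⟨hα, hγ⟩ := append_inj heq (by simp)
  exact ⟨hα ▸ hsα.symm, hγ ▸ hsγ.symm⟩

lemma exists_eq_map_add_of_perm_range' {s a : ℕ} (h : γ ~ range' (s + a) γ.length) :
    ∃ β, γ = β.map (· + a) ∧ β ~ range' s γ.length := by
  refine ⟨γ.map (· - a), ?_, ?_⟩
  · rw [map_map, map_congr_left, map_id]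
    intro y hy
    have := mem_range'_1.1 (h.subset hy)
    simp only [Function.comp_apply, id_eq]
    omega
  · have := h.map (· - a)
    rwa [map_sub_range' (Nat.le_add_left a s), Nat.add_sub_cancel] at this

end PermRange

end List

section Unfolding

variable {X Y : List ℕ} {m : ℕ}

lemma TinAux_succ_append_cons (fuel : ℕ) (hX : ∀ x ∈ X, x < m) (hY : ∀ y ∈ Y, y ≤ m) :
    TinAux (fuel + 1) (X ++ m :: Y) = .node (TinAux fuel X) m (TinAux fuel Y) := by
  obtain ⟨x, xs, hxs⟩ := exists_cons_of_ne_nil (append_ne_nil_of_right_ne_nil X (cons_ne_nil m Y))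
  rw [hxs, TinAux, ← hxs, foldr_max_append_cons hX hY, takeWhile_append_cons hX,
    tail_dropWhile_append_cons hX]

lemma PpermAux_succ_append_cons (fuel : ℕ) (hX : ∀ x ∈ X, x < m) (hY : ∀ y ∈ Y, y ≤ m) :
    PpermAux (fuel + 1) (X ++ m :: Y) =
      (PpermAux fuel X).map (· + Y.length) ++ m :: PpermAux fuel (Y.map (· - X.length)) := by
  obtain ⟨x, xs, hxs⟩ := exists_cons_of_ne_nil (append_ne_nil_of_right_ne_nil X (cons_ne_nil m Y))
  rw [hxs, PpermAux, ← hxs, foldr_max_append_cons hX hY, takeWhile_append_cons hX,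
    tail_dropWhile_append_cons hX, append_assoc, singleton_append]

lemma TinAux_eq_of_length_le {f₁ f₂ : ℕ} {l : List ℕ} (h₁ : l.length ≤ f₁) (h₂ : l.length ≤ f₂) :
    TinAux f₁ l = TinAux f₂ l := by
  induction f₁ generalizing f₂ l with
  | zero => rw [eq_nil_of_length_eq_zero (Nat.le_zero.1 h₁)]; cases f₂ <;> rfl
  | succ f ih =>
    rcases eq_or_ne l [] with rfl | hl
    · cases f₂ <;> rfl
    obtain ⟨X, m, Y, rfl, hX, hY⟩ := exists_eq_append_cons_max_s15 hl
    obtain ⟨g, rfl⟩ : ∃ g, f₂ = g + 1 := Nat.exists_eq_succ_of_ne_zero (by simp at h₂; omega)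
    simp only [length_append, length_cons] at h₁ h₂
    rw [TinAux_succ_append_cons f hX hY, TinAux_succ_append_cons g hX hY,
      ih (by omega) (by omega : X.length ≤ g), ih (by omega) (by omega : Y.length ≤ g)]

lemma PpermAux_eq_of_length_le {f₁ f₂ : ℕ} {l : List ℕ} (h₁ : l.length ≤ f₁)
    (h₂ : l.length ≤ f₂) : PpermAux f₁ l = PpermAux f₂ l := by
  induction f₁ generalizing f₂ l with
  | zero => rw [eq_nil_of_length_eq_zero (Nat.le_zero.1 h₁)]; cases f₂ <;> rfl
  | succ f ih =>
    rcases eq_or_ne l [] with rfl | hl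
    · cases f₂ <;> rfl
    obtain ⟨X, m, Y, rfl, hX, hY⟩ := exists_eq_append_cons_max_s15 hl
    obtain ⟨g, rfl⟩ : ∃ g, f₂ = g + 1 := Nat.exists_eq_succ_of_ne_zero (by simp at h₂; omega)
    simp only [length_append, length_cons] at h₁ h₂
    rw [PpermAux_succ_append_cons f hX hY, PpermAux_succ_append_cons g hX hY,
      ih (by omega) (by omega : X.length ≤ g),
      ih (by simp; omega) (by simp; omega : (Y.map (· - X.length)).length ≤ g)]

theorem Tin_append_cons (hX : ∀ x ∈ X, x < m) (hY : ∀ y ∈ Y, y ≤ m) :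
    Tin (X ++ m :: Y) = .node (Tin X) m (Tin Y) := by
  rw [Tin, length_append, length_cons, ← add_assoc, TinAux_succ_append_cons _ hX hY, Tin, Tin,
    TinAux_eq_of_length_le (l := X) (by omega) le_rfl,
    TinAux_eq_of_length_le (l := Y) (by omega) le_rfl]

theorem Pperm_append_cons_s15 (hX : ∀ x ∈ X, x < m) (hY : ∀ y ∈ Y, y ≤ m) :
    Pperm (X ++ m :: Y) =
      (Pperm X).map (· + Y.length) ++ m :: Pperm (Y.map (· - X.length)) := by
  rw [Pperm, length_append, length_cons, ← add_assoc, PpermAux_succ_append_cons _ hX hY, Pperm,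
    Pperm, PpermAux_eq_of_length_le (l := X) (by omega) le_rfl,
    PpermAux_eq_of_length_le (l := Y.map _) (by simp) le_rfl, length_map]

end Unfolding

namespace BTree

theorem map_map (f g : ℕ → ℕ) (t : BTree) : (t.map f).map g = t.map (g ∘ f) := by
  induction t with
  | leaf => rfl
  | node l n r ihl ihr => simp only [BTree.map, ihl, ihr, Function.comp_apply]

theorem inorder_map (f : ℕ → ℕ) (t : BTree) : (t.map f).inorder = t.inorder.map f := by
  induction t with
  | leaf => rfl
  | node l n r ihl ihr => simp [BTree.map, BTree.inorder, ihl, ihr]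

end BTree

theorem inorder_Tin (l : List ℕ) : (Tin l).inorder = l := by
  induction l using List.induction_on_max_split with
  | nil => rfl
  | split X m Y hX hY ihX ihY => simp [Tin_append_cons hX hY, BTree.inorder, ihX, ihY]

theorem BTree.Decreasing.Tin_inorder {t : BTree} (ht : t.Decreasing) : Tin t.inorder = t := by
  induction t with
  | leaf => rfl
  | node l n r ihl ihr =>
    obtain ⟨hl, hr, hln, hrn⟩ := ht
    rw [BTree.inorder, append_assoc, singleton_append,
      Tin_append_cons hln fun y hy => (hrn y hy).le, ihl hl, ihr hr]

theorem Tin_map_of_strictMono {f : ℕ → ℕ} (hf : StrictMono f) (l : List ℕ) :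
    Tin (l.map f) = (Tin l).map f := by
  induction l using List.induction_on_max_split with
  | nil => rfl
  | split X m Y hX hY ihX ihY =>
    have hfX : ∀ x ∈ X.map f, x < f m := by
      simpa using fun x hx => hf (hX x hx)
    have hfY : ∀ y ∈ Y.map f, y ≤ f m := by
      simpa using fun y hy => hf.monotone (hY y hy)
    rw [map_append, map_cons, Tin_append_cons hfX hfY, Tin_append_cons hX hY, BTree.map, ihX, ihY]

namespace Avoids231

variable {σ τ : List ℕ}

theorem of_append_left (h : Avoids231 (σ ++ τ)) : Avoids231 σ := by
  rintro ⟨i, j, k, hij, hjk, hk, hki, hij'⟩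
  refine h ⟨i, j, k, hij, hjk, by simp; omega, ?_⟩
  rw [getD_append _ _ _ _ (by omega), getD_append _ _ _ _ (by omega),
    getD_append _ _ _ _ (by omega)]
  exact ⟨hki, hij'⟩

theorem of_append_right (h : Avoids231 (σ ++ τ)) : Avoids231 τ := by
  rintro ⟨i, j, k, hij, hjk, hk, hki, hij'⟩
  refine h ⟨σ.length + i, σ.length + j, σ.length + k, by omega, by omega, by simp; omega, ?_⟩
  simpa only [getD_append_right _ _ _ _ (Nat.le_add_right _ _), Nat.add_sub_cancel_left]
    using ⟨hki, hij'⟩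

theorem of_map_s15 {f : ℕ → ℕ} (hf : StrictMono f) (h : Avoids231 (σ.map f)) : Avoids231 σ := by
  rintro ⟨i, j, k, hij, hjk, hk, hki, hij'⟩
  refine h ⟨i, j, k, hij, hjk, by simpa using hk, ?_⟩
  have hget : ∀ t < σ.length, (σ.map f).getD t 0 = f (σ.getD t 0) := fun t ht => by
    rw [getD_eq_getElem _ _ (by simpa), getElem_map, getD_eq_getElem _ _ ht]
  rw [hget i (by omega), hget j (by omega), hget k hk]
  exact ⟨hf hki, hf hij'⟩

theorem le_of_mem_of_mem_s15 {n x y : ℕ} (h : Avoids231 (σ ++ n :: τ)) (hx : x ∈ σ) (hy : y ∈ τ)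
    (hxn : x < n) : x ≤ y := by
  obtain ⟨i, hi, rfl⟩ := mem_iff_getElem.1 hx
  obtain ⟨k, hk, rfl⟩ := mem_iff_getElem.1 hy
  by_contra! hyx
  refine h ⟨i, σ.length, σ.length + (k + 1), hi, by omega, by simp; omega, ?_, ?_⟩
  · rwa [getD_append _ _ _ _ hi, getD_eq_getElem _ _ hi, getD_append_right _ _ _ _ (by omega),
      Nat.add_sub_cancel_left, getD_cons_succ, getD_eq_getElem _ _ hk]
  · rwa [getD_append _ _ _ _ hi, getD_eq_getElem _ _ hi, getD_append_right _ _ _ _ le_rfl,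
      Nat.sub_self, getD_cons_zero]


theorem exists_eq_append_cons_map_add {π : List ℕ} (hπ : π ~ range' 1 π.length)
    (h : Avoids231 π) (hne : π ≠ []) :
    ∃ α β, π = α ++ (α.length + β.length + 1) :: β.map (· + α.length) ∧
      α ~ range' 1 α.length ∧ β ~ range' 1 β.length ∧ Avoids231 α ∧ Avoids231 β := by
  generalize hn : π.length = n at hπ
  have hn_pos : 0 < n := hn ▸ length_pos_iff.2 hne
  obtain ⟨α, γ, rfl⟩ := append_of_mem (hπ.mem_iff.2 (mem_range'_1.2 ⟨hn_pos, by omega⟩))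
  obtain rfl : n = α.length + γ.length + 1 := by simp at hn; omega
  have hrest : α ++ γ ~ range' 1 (α.length + γ.length) := by
    have hlast := perm_append_singleton (1 + (α.length + γ.length)) (range' 1 (α.length + γ.length))
    rw [← range'_1_concat, Nat.add_comm 1] at hlast
    exact (perm_middle.symm.trans (hπ.trans hlast)).cons_inv
  have hlt : ∀ x ∈ α, ∀ y ∈ γ, x < y := by
    intro x hx y hy
    have hxn := mem_range'_1.1 (hrest.subset (mem_append_left γ hx))
    refine lt_of_le_of_ne (h.le_of_mem_of_mem_s15 hx hy (by omega)) ?_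
    rintro rfl
    exact disjoint_of_nodup_append (hrest.nodup_iff.2 nodup_range') hx hy
  obtain ⟨hα, hγ⟩ := perm_range'_of_append hrest hlt
  obtain ⟨β, rfl, hβ⟩ := exists_eq_map_add_of_perm_range' hγ
  rw [length_map] at hβ ⊢
  have hsuffix : Avoids231 ((α ++ [α.length + β.length + 1]) ++ β.map (· + α.length)) := by
    simpa using h
  exact ⟨α, β, rfl, hα, hβ, h.of_append_left, hsuffix.of_append_right.of_map_s15 add_left_strictMono⟩

@[elab_as_elim]
theorem perm_induction {motive : List ℕ → Prop} (nil : motive [])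
    (step : ∀ α β, α ~ range' 1 α.length → β ~ range' 1 β.length → Avoids231 α →
      Avoids231 β → motive α → motive β →
      motive (α ++ (α.length + β.length + 1) :: β.map (· + α.length)))
    {π : List ℕ} (hπ : π ~ range' 1 π.length) (h : Avoids231 π) : motive π := by
  induction hn : π.length using Nat.strong_induction_on generalizing π with
  | _ n ih =>
    rcases eq_or_ne π [] with rfl | hne
    · exact nil
    obtain ⟨α, β, rfl, hα, hβ, hα231, hβ231⟩ := exists_eq_append_cons_map_add hπ h hne
    simp only [length_append, length_cons, length_map] at hn
    exact step α β hα hβ hα231 hβ231 (ih _ (by omega) hα hα231 rfl) (ih _ (by omega) hβ hβ231 rfl)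

end Avoids231

section SkewDecomposition

variable {α β : List ℕ}

theorem Tin_append_cons_map_add (hα : ∀ x ∈ α, x ≤ α.length) (hβ : ∀ y ∈ β, y ≤ β.length) :
    Tin (α ++ (α.length + β.length + 1) :: β.map (· + α.length)) =
      .node (Tin α) (α.length + β.length + 1) ((Tin β).map (· + α.length)) := by
  have hX : ∀ x ∈ α, x < α.length + β.length + 1 := fun x hx => by have := hα x hx; omega
  have hY : ∀ y ∈ β.map (· + α.length), y ≤ α.length + β.length + 1 := by
    simpa using fun y hy => by have := hβ y hy; omega
  rw [Tin_append_cons hX hY, Tin_map_of_strictMono add_left_strictMono]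

theorem Pperm_append_cons_map_add (hα : ∀ x ∈ α, x ≤ α.length) (hβ : ∀ y ∈ β, y ≤ β.length) :
    Pperm (α ++ (α.length + β.length + 1) :: β.map (· + α.length)) =
      (Pperm α).map (· + β.length) ++ (α.length + β.length + 1) :: Pperm β := by
  have hX : ∀ x ∈ α, x < α.length + β.length + 1 := fun x hx => by have := hα x hx; omega
  have hY : ∀ y ∈ β.map (· + α.length), y ≤ α.length + β.length + 1 := by
    simpa using fun y hy => by have := hβ y hy; omega
  rw [Pperm_append_cons_s15 hX hY, length_map, map_map]
  simp [Function.comp_def]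

end SkewDecomposition

namespace Avoids231

theorem Pperm_perm {π : List ℕ} (hπ : π ~ range' 1 π.length) (h : Avoids231 π) :
    Pperm π ~ range' 1 π.length := by
  refine perm_induction (motive := fun π => Pperm π ~ range' 1 π.length) (.refl []) ?_ hπ h
  intro α β hα hβ _ _ ihα ihβ
  rw [Pperm_append_cons_map_add (fun x => le_of_perm_range' hα)
    (fun y => le_of_perm_range' hβ)]
  have hαb : (Pperm α).map (· + β.length) ~ range' (1 + β.length) α.length := by
    simpa [Nat.add_comm, ← map_add_range'] using ihα.map (· + β.length)
  rw [length_append, length_cons, length_map]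
  calc _ ~ (α.length + β.length + 1) :: ((Pperm α).map (· + β.length) ++ Pperm β) := perm_middle
    _ ~ (α.length + β.length + 1) :: (range' 1 β.length ++ range' (1 + β.length) α.length) :=
      ((hαb.append ihβ).trans perm_append_comm).cons _
    _ ~ range' 1 (β.length + α.length) ++ [α.length + β.length + 1] := by
      rw [range'_append_1]
      exact (perm_append_singleton _ _).symm
    _ = range' 1 (α.length + (β.length + 1)) := by
      rw [show α.length + (β.length + 1) = β.length + α.length + 1 by omega, range'_1_concat]
      congr 2
      omega


theorem decreasing_map_Tin {π : List ℕ} (hπ : π ~ range' 1 π.length) (h : Avoids231 π)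
    {lam f : ℕ → ℕ} (hf : StrictMono f) (hmap : π.map lam = (Pperm π).map f) :
    ((Tin π).map lam).Decreasing := by
  revert lam f
  refine perm_induction (motive := fun π => ∀ {lam f : ℕ → ℕ}, StrictMono f →
    π.map lam = (Pperm π).map f → ((Tin π).map lam).Decreasing) (fun _ _ => trivial) ?_ hπ h
  intro α β hα hβ hα231 hβ231 ihα ihβ lam f hf hmap
  have hPα := hα231.Pperm_perm hα
  have hPβ := hβ231.Pperm_perm hβ
  rw [Pperm_append_cons_map_add (fun x => le_of_perm_range' hα)
    (fun y => le_of_perm_range' hβ)] at hmap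
  simp only [map_append, map_cons, map_map] at hmap
  obtain ⟨hmα, hrest⟩ := append_inj hmap (by simp [hPα.length_eq])
  obtain ⟨hmn, hmβ⟩ := cons.inj hrest
  rw [Tin_append_cons_map_add (fun x => le_of_perm_range' hα)
    (fun y => le_of_perm_range' hβ), BTree.map, BTree.map_map]
  refine ⟨ihα (hf.comp add_left_strictMono) hmα, ihβ hf hmβ, ?_, ?_⟩
  · intro x hx
    rw [BTree.inorder_map, inorder_Tin, hmα] at hx
    obtain ⟨p, hp, rfl⟩ := mem_map.1 hx
    have := le_of_perm_range' hPα hp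
    rw [hmn]
    exact hf (by simp; omega)
  · intro y hy
    rw [BTree.inorder_map, inorder_Tin, hmβ] at hy
    obtain ⟨q, hq, rfl⟩ := mem_map.1 hy
    have := le_of_perm_range' hPβ hq
    rw [hmn]
    exact hf (by omega)

end Avoids231

/-- applying the relabeling `λ_π` to `T_in(π)` yields
`T_in(P(π))`; in particular the result is a decreasing tree. -/
theorem relabel_Tin :
    ∀ π : List ℕ, π.Perm (List.range' 1 π.length) → Avoids231 π →
      ∀ lam : ℕ → ℕ,
        (∀ i, i < π.length → lam (π.getD i 0) = (Pperm π).getD i 0) →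
        (Tin π).map lam = Tin (Pperm π) ∧ ((Tin π).map lam).Decreasing := by
  intro π hπ h lam hlam
  have hlen : π.length = (Pperm π).length :=
    ((h.Pperm_perm hπ).length_eq.trans length_range').symm
  have hmap : π.map lam = Pperm π := by
    refine ext_getElem (by simpa using hlen) fun i hi _ => ?_
    rw [getElem_map, ← getD_eq_getElem _ 0, ← getD_eq_getElem _ 0, hlam i (by simpa using hi)]
  have hdec := h.decreasing_map_Tin hπ strictMono_id (by rw [hmap, map_id])
  refine ⟨?_, hdec⟩
  calc (Tin π).map lam = Tin ((Tin π).map lam).inorder := hdec.Tin_inorder.symm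
    _ = Tin (Pperm π) := by rw [BTree.inorder_map, inorder_Tin, hmap]
end
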